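/- Assume the coherence assumption with constant μ > 0 and φ'(z) ≥ ρ1 > 0 for all z ∈ ℝ. Then the loss L satisfies the Polyak–Łojasiewicz inequality: for every θ ∈ ℝ^{md}, ‖DL(θ)‖² ≥ 4 m μ ρ1² · L(θ), where DL(θ) is the Euclidean gradient of L at θ. -/

import Mathlib

/-!
The gradient of `L` has `j`-th block `∑ i, 2 (f_i - y_i) φ'(θ_j · x_i) • x_i`. Coherence bounds the
squared norm of this block below by `μ ∑ i, (2 (f_i - y_i) φ'(θ_j · x_i))² ≥ 4 μ ρ₁² L`, and the
`m` blocks add up to the factor `m`.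
-/

open scoped RealInnerProductSpace
open Real Filter

noncomputable section

/-- The parameter space ℝ^{md}: m blocks θ_j ∈ ℝ^d, with the Euclidean norm. -/
abbrev Param (m d : ℕ) : Type := PiLp 2 (fun _ : Fin m => EuclideanSpace ℝ (Fin d))

/-- Network output f_i(θ) = Σ_j φ(θ_j · x_i). -/
def netF {n m d : ℕ} (φ : ℝ → ℝ) (x : Fin n → EuclideanSpace ℝ (Fin d)) (i : Fin n)
    (θ : Param m d) : ℝ := ∑ j, φ ⟪θ j, x i⟫

/-- Euclidean gradient Df_i(θ), with j-th block φ'(θ_j · x_i) x_i. -/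
def gradF {n m d : ℕ} (φ : ℝ → ℝ) (x : Fin n → EuclideanSpace ℝ (Fin d)) (i : Fin n)
    (θ : Param m d) : Param m d := WithLp.toLp 2 fun j => (deriv φ ⟪θ j, x i⟫) • x i

/-- Implicit regularizer G(θ) = Σ_i Σ_j φ'(θ_j · x_i)². -/
def regG {n m d : ℕ} (φ : ℝ → ℝ) (x : Fin n → EuclideanSpace ℝ (Fin d))
    (θ : Param m d) : ℝ := ∑ i, ∑ j, (deriv φ ⟪θ j, x i⟫) ^ 2

/-- Euclidean gradient DG(θ), with j-th block Σ_i 2 φ'(θ_j·x_i) φ''(θ_j·x_i) x_i. -/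
def gradRegG {n m d : ℕ} (φ : ℝ → ℝ) (x : Fin n → EuclideanSpace ℝ (Fin d))
    (θ : Param m d) : Param m d :=
  WithLp.toLp 2 fun j => ∑ i, (2 * deriv φ ⟪θ j, x i⟫ * deriv (deriv φ) ⟪θ j, x i⟫) • x i

/-- Squared loss L(θ) = Σ_i (f_i(θ) − y_i)². -/
def lossL {n m d : ℕ} (φ : ℝ → ℝ) (x : Fin n → EuclideanSpace ℝ (Fin d)) (y : Fin n → ℝ)
    (θ : Param m d) : ℝ := ∑ i, (netF φ x i θ - y i) ^ 2

/-- Jacobian Df(θ) : ℝ^{md} → ℝ^n, whose i-th row is Df_i(θ). -/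
def jacobian {n m d : ℕ} (φ : ℝ → ℝ) (x : Fin n → EuclideanSpace ℝ (Fin d))
    (θ : Param m d) : Param m d →ₗ[ℝ] (Fin n → ℝ) :=
  LinearMap.pi fun i => (innerSL ℝ (gradF φ x i θ)).toLinearMap

/-- Riemannian gradient ∇G(θ): orthogonal projection of DG(θ) onto ker Df(θ). -/
def rgradG {n m d : ℕ} (φ : ℝ → ℝ) (x : Fin n → EuclideanSpace ℝ (Fin d))
    (θ : Param m d) : Param m d :=
  ((LinearMap.ker (jacobian φ x θ)).orthogonalProjectionOnto (gradRegG φ x θ) : Param m d)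

lemma mul_sq_mul_sum_sq_le_norm_sum_smul_sq {ι E : Type*} [Fintype ι]
    [SeminormedAddCommGroup E] [NormedSpace ℝ E] {v : ι → E} {μ ρ : ℝ} (hμ : 0 ≤ μ)
    (hcoh : ∀ c : ι → ℝ, μ * ∑ i, c i ^ 2 ≤ ‖∑ i, c i • v i‖ ^ 2) (hρ : 0 ≤ ρ)
    {w : ι → ℝ} (hw : ∀ i, ρ ≤ w i) (c : ι → ℝ) :
    μ * ρ ^ 2 * ∑ i, c i ^ 2 ≤ ‖∑ i, (c i * w i) • v i‖ ^ 2 := by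
  refine le_trans ?_ (hcoh fun i => c i * w i)
  rw [mul_assoc, Finset.mul_sum, Finset.mul_sum, Finset.mul_sum]
  gcongr with i
  rw [mul_pow, mul_comm (ρ ^ 2)]
  gcongr
  exact hw i

variable {n m d : ℕ} {φ : ℝ → ℝ} (x : Fin n → EuclideanSpace ℝ (Fin d))

lemma hasGradientAt_netF (hφ : Differentiable ℝ φ) (i : Fin n) (θ : Param m d) :
    HasGradientAt (netF φ x i) (gradF φ x i θ) θ := by
  rw [hasGradientAt_iff_hasFDerivAt]
  have hblock : ∀ j : Fin m, HasFDerivAt (fun θ' : Param m d => φ ⟪θ' j, x i⟫)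
      (deriv φ ⟪θ j, x i⟫ • (innerSL ℝ (x i)).comp (PiLp.proj 2 _ j)) θ := by
    intro j
    have hinner : HasFDerivAt (fun θ' : Param m d => ⟪θ' j, x i⟫)
        ((innerSL ℝ (x i)).comp (PiLp.proj 2 _ j)) θ := by
      convert ((innerSL ℝ (x i)).comp (PiLp.proj (𝕜 := ℝ) 2
        (fun _ : Fin m => EuclideanSpace ℝ (Fin d)) j)).hasFDerivAt using 2 with θ'
      simp [real_inner_comm]
    exact (hφ _).hasDerivAt.comp_hasFDerivAt θ hinner
  refine (HasFDerivAt.fun_sum fun j _ => hblock j).congr_fderiv ?_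
  ext v
  simp [gradF, PiLp.inner_apply, inner_smul_left]

lemma hasGradientAt_lossL (hφ : Differentiable ℝ φ) (y : Fin n → ℝ) (θ : Param m d) :
    HasGradientAt (lossL φ x y)
      (∑ i, (2 * (netF φ x i θ - y i)) • gradF φ x i θ) θ := by
  rw [hasGradientAt_iff_hasFDerivAt]
  have hterm : ∀ i : Fin n, HasFDerivAt (fun θ' : Param m d => (netF φ x i θ' - y i) ^ 2)
      ((2 * (netF φ x i θ - y i)) • InnerProductSpace.toDual ℝ _ (gradF φ x i θ)) θ := by
    intro i
    simpa using (((hasGradientAt_netF x hφ i θ).hasFDerivAt).sub_const (y i)).pow 2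
  refine (HasFDerivAt.fun_sum fun i _ => hterm i).congr_fderiv ?_
  ext v
  simp

lemma sum_smul_gradF_apply (c : Fin n → ℝ) (θ : Param m d) (j : Fin m) :
    (∑ i, c i • gradF φ x i θ) j = ∑ i, (c i * deriv φ ⟪θ j, x i⟫) • x i := by
  simp [gradF, mul_smul]

theorem stmt_9_general
    (n m d : ℕ)
    (x : Fin n → EuclideanSpace ℝ (Fin d))
    (μ : ℝ) (hμ : 0 < μ)
    (hcoh : ∀ c : Fin n → ℝ, μ * ∑ i, (c i) ^ 2 ≤ ‖∑ i, c i • x i‖ ^ 2)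
    (y : Fin n → ℝ)
    (φ : ℝ → ℝ) (hφ : ContDiff ℝ (⊤ : ℕ∞) φ)
    (ρ1 : ℝ) (hρ1 : 0 < ρ1)
    (hφ' : ∀ z, ρ1 ≤ deriv φ z)
    (θ : Param m d) :
    4 * (m : ℝ) * μ * ρ1 ^ 2 * lossL φ x y θ ≤ ‖gradient (lossL φ x y) θ‖ ^ 2 := by
  rw [(hasGradientAt_lossL x (hφ.differentiable (by simp)) y θ).gradient,
    PiLp.norm_sq_eq_of_L2]
  have hblock : ∀ j : Fin m, 4 * μ * ρ1 ^ 2 * lossL φ x y θ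
      ≤ ‖(∑ i, (2 * (netF φ x i θ - y i)) • gradF φ x i θ) j‖ ^ 2 := by
    intro j
    rw [sum_smul_gradF_apply]
    convert mul_sq_mul_sum_sq_le_norm_sum_smul_sq hμ.le hcoh hρ1.le (fun i => hφ' ⟪θ j, x i⟫)
      (fun i => 2 * (netF φ x i θ - y i)) using 1
    simp only [lossL, mul_pow, ← Finset.mul_sum]
    ring
  calc 4 * (m : ℝ) * μ * ρ1 ^ 2 * lossL φ x y θ
      = ∑ _j : Fin m, 4 * μ * ρ1 ^ 2 * lossL φ x y θ := by
        simp only [Finset.sum_const, Finset.card_univ, Fintype.card_fin, nsmul_eq_mul]; ring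
    _ ≤ _ := Finset.sum_le_sum fun j _ => hblock j

/-- Polyak–Łojasiewicz inequality ‖DL(θ)‖² ≥ 4 m μ ρ1² L(θ). -/
theorem stmt_9
    (n m d : ℕ) (hn : 1 ≤ n) (hm : 1 ≤ m) (hd : 1 ≤ d)
    (x : Fin n → EuclideanSpace ℝ (Fin d)) (hx : ∀ i, ‖x i‖ = 1)
    (μ : ℝ) (hμ : 0 < μ)
    (hcoh : ∀ c : Fin n → ℝ, μ * ∑ i, (c i) ^ 2 ≤ ‖∑ i, c i • x i‖ ^ 2)
    (y : Fin n → ℝ)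
    (φ : ℝ → ℝ) (hφ : ContDiff ℝ (⊤ : ℕ∞) φ)
    (ρ1 : ℝ) (hρ1 : 0 < ρ1)
    (hφ' : ∀ z, ρ1 ≤ deriv φ z)
    (θ : Param m d) :
    4 * (m : ℝ) * μ * ρ1 ^ 2 * lossL φ x y θ ≤ ‖gradient (lossL φ x y) θ‖ ^ 2 :=
  stmt_9_general n m d x μ hμ hcoh y φ hφ ρ1 hρ1 hφ' θ
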